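/- arXiv:1908.03752 — 4 statements merged into one kernel-verified Lean document; each statement's English description precedes it below -/
import Mathlib

section
/- For every natural number n, the 2-adic valuation of the n-th Catalan number equals wt(n+1) - 1, where wt(m) is the number of ones in the binary expansion of m. -/
private lemma wt_two_mul (n : ℕ) :
    (Nat.digits 2 (2 * n)).sum = (Nat.digits 2 n).sum := by
  rcases Nat.eq_zero_or_pos n with h | h
  · simp [h]
  · rw [Nat.digits_def' (by norm_num : 1 < 2) (by positivity)]
    simp [Nat.mul_div_cancel_left n two_pos, Nat.mul_mod_right]

private lemma ofDigits_eq_zero_of_sum_eq_zero (L : List ℕ) (h : L.sum = 0) :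
    Nat.ofDigits 2 L = 0 := by
  induction L with
  | nil => simp [Nat.ofDigits]
  | cons a t ih =>
    simp only [List.sum_cons, Nat.add_eq_zero] at h
    have := ih h.2
    simp [Nat.ofDigits_cons, h.1, this]

private lemma wt_pos (n : ℕ) : 0 < (Nat.digits 2 (n + 1)).sum := by
  by_contra hc
  have h0 : (Nat.digits 2 (n + 1)).sum = 0 := by omega
  have := ofDigits_eq_zero_of_sum_eq_zero _ h0
  rw [Nat.ofDigits_digits] at this
  omega

private lemma catalan_ne_zero' (n : ℕ) : catalan n ≠ 0 := by
  have h := succ_mul_catalan_eq_centralBinom n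
  have h2 := n.centralBinom_pos
  intro h0
  rw [h0, mul_zero] at h
  omega

open Nat in
theorem padicValNat_two_catalan (n : ℕ) :
    padicValNat 2 (catalan n) = (Nat.digits 2 (n + 1)).sum - 1 := by
  haveI : Fact (Nat.Prime 2) := ⟨Nat.prime_two⟩
  have key : catalan n * n ! * (n + 1)! = (2 * n)! := by
    have h1 := Nat.choose_mul_factorial_mul_factorial (show n ≤ 2 * n by omega)
    have h2 := succ_mul_catalan_eq_centralBinom n
    rw [Nat.centralBinom] at h2
    have h3 : 2 * n - n = n := by omega
    rw [h3] at h1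
    calc catalan n * n ! * (n + 1)! = (n + 1) * catalan n * n ! * n ! := by
          rw [Nat.factorial_succ]; ring
      _ = (2 * n).choose n * n ! * n ! := by rw [h2]
      _ = (2 * n)! := h1
  have hv : padicValNat 2 (catalan n) + padicValNat 2 (n !) + padicValNat 2 ((n + 1)!)
      = padicValNat 2 ((2 * n)!) := by
    rw [← key, padicValNat.mul (Nat.mul_ne_zero (catalan_ne_zero' n) n.factorial_ne_zero)
        (n + 1).factorial_ne_zero,
      padicValNat.mul (catalan_ne_zero' n) n.factorial_ne_zero]
  have leg : ∀ m : ℕ, padicValNat 2 (m !) = m - (Nat.digits 2 m).sum := by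
    intro m
    have := sub_one_mul_padicValNat_factorial (p := 2) m
    simpa using this
  rw [leg, leg, leg, wt_two_mul] at hv
  have b1 := Nat.digit_sum_le 2 n
  have b2 := Nat.digit_sum_le 2 (n + 1)
  have b3 := wt_pos n
  omega
end

section
/- The n-th Catalan number Cat(n) is odd if and only if n = 2^k - 1 for some natural number k ≥ 0. -/
open Nat

private lemma sum2_two_mul (m : ℕ) :
    (Nat.digits 2 (2 * m)).sum = (Nat.digits 2 m).sum := by
  rcases Nat.eq_zero_or_pos m with h | h
  · simp [h]
  · rw [Nat.digits_def' (by norm_num) (by omega)]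
    simp [Nat.mul_div_cancel_left m (by norm_num : 0 < 2), Nat.mul_mod_right]

private lemma sum2_two_mul_add_one (m : ℕ) :
    (Nat.digits 2 (2 * m + 1)).sum = (Nat.digits 2 m).sum + 1 := by
  rw [Nat.digits_def' (by norm_num) (by omega)]
  have h1 : (2 * m + 1) % 2 = 1 := by omega
  have h2 : (2 * m + 1) / 2 = m := by omega
  simp only [List.sum_cons, h1, h2]
  omega

private lemma sum2_pos {m : ℕ} (hm : m ≠ 0) : 0 < (Nat.digits 2 m).sum := by
  induction m using Nat.strong_induction_on with
  | _ m ih =>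
    rcases Nat.even_or_odd m with ⟨t, ht⟩ | ⟨t, ht⟩
    · subst ht
      rw [show t + t = 2 * t by ring, sum2_two_mul]
      exact ih t (by omega) (by omega)
    · subst ht
      rw [sum2_two_mul_add_one]
      omega

private lemma key (n : ℕ) :
    padicValNat 2 (n + 1) = (Nat.digits 2 n).sum ↔ ∃ k : ℕ, n = 2 ^ k - 1 := by
  induction n using Nat.strong_induction_on with
  | _ n ih =>
    rcases Nat.even_or_odd n with ⟨t, ht⟩ | ⟨t, ht⟩
    · -- n even: n + 1 odd, valuation 0
      have hv : padicValNat 2 (n + 1) = 0 := by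
        apply padicValNat.eq_zero_of_not_dvd
        omega
      rw [hv]
      constructor
      · intro h
        have : n = 0 := by
          by_contra hn
          have := sum2_pos hn
          omega
        exact ⟨0, by omega⟩
      · rintro ⟨k, hk⟩
        have : n = 0 := by
          rcases Nat.eq_zero_or_pos k with h0 | h0
          · simp [h0] at hk; omega
          · exfalso
            have h2 : 2 ≤ 2 ^ k := Nat.one_lt_two_pow_iff.mpr (by omega)
            have hd : 2 ∣ 2 ^ k := dvd_pow_self 2 (by omega)
            omega
        simp [this]
    · -- n odd, n = 2t+1
      have hn1 : n + 1 = 2 * (t + 1) := by omega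
      have hv : padicValNat 2 (n + 1) = padicValNat 2 (t + 1) + 1 := by
        rw [hn1, padicValNat.mul (by norm_num) (by omega), padicValNat.self (by norm_num)]
        omega
      have hs : (Nat.digits 2 n).sum = (Nat.digits 2 t).sum + 1 := by
        rw [show n = 2 * t + 1 by omega, sum2_two_mul_add_one]
      rw [hv, hs]
      have iht := ih t (by omega)
      constructor
      · intro h
        obtain ⟨k, hk⟩ := iht.mp (by omega)
        refine ⟨k + 1, ?_⟩
        have : 1 ≤ 2 ^ k := Nat.one_le_two_pow
        rw [pow_succ]
        omega
      · rintro ⟨k, hk⟩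
        rcases Nat.eq_zero_or_pos k with h0 | h0
        · simp [h0] at hk; omega
        · have hk' : t = 2 ^ (k - 1) - 1 := by
            have : 2 ^ k = 2 * 2 ^ (k - 1) := by
              nth_rewrite 1 [show k = k - 1 + 1 by omega]
              rw [pow_succ]
              ring
            have h1 : 1 ≤ 2 ^ (k - 1) := Nat.one_le_two_pow
            omega
          have := iht.mpr ⟨k - 1, hk'⟩
          omega

theorem odd_catalan_iff (n : ℕ) :
    Odd (catalan n) ↔ ∃ k : ℕ, n = 2 ^ k - 1 := by
  have hcb : padicValNat 2 (Nat.centralBinom n) = (Nat.digits 2 n).sum := by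
    have := sub_one_mul_padicValNat_choose_eq_sub_sum_digits (p := 2) (k := n)
      (n := 2 * n) (by omega)
    have h2n : (Nat.digits 2 (2 * n)).sum = (Nat.digits 2 n).sum := sum2_two_mul n
    rw [Nat.centralBinom]
    have hsub : 2 * n - n = n := by omega
    rw [hsub, h2n] at this
    omega
  have hmul : (n + 1) * catalan n = Nat.centralBinom n := succ_mul_catalan_eq_centralBinom n
  have hcat : catalan n ≠ 0 := by
    intro h
    have := Nat.centralBinom_pos n
    rw [← hmul, h, mul_zero] at this
    omega
  have hval : padicValNat 2 (n + 1) + padicValNat 2 (catalan n)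
      = (Nat.digits 2 n).sum := by
    rw [← hcb, ← hmul, padicValNat.mul (by omega) hcat]
  have hle : padicValNat 2 (catalan n) = 0 ↔ Odd (catalan n) := by
    rw [Nat.odd_iff, ← Nat.two_dvd_ne_zero]
    constructor
    · intro h hd
      have := (dvd_iff_padicValNat_ne_zero hcat).mp hd
      omega
    · intro h
      exact padicValNat.eq_zero_of_not_dvd h
  rw [← hle, ← key n]
  omega
end

section
/- For n ≥ 2, if p is a prime with n+1 < p < 2n, then p divides Cat(n) but p^2 does not divide Cat(n). -/
theorem prime_in_first_segment_dvd_catalan (n p : ℕ) (hn : 2 ≤ n) (hp : p.Prime)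
    (h1 : n + 1 < p) (h2 : p < 2 * n) :
    p ∣ catalan n ∧ ¬ p ^ 2 ∣ catalan n := by
  have hc := succ_mul_catalan_eq_centralBinom n
  have hnp : n < p := lt_of_le_of_lt (Nat.le_succ n) h1
  have hpcb : p ∣ n.centralBinom := by
    rw [Nat.centralBinom, two_mul]
    exact Nat.Prime.dvd_choose_add hp hnp hnp (by omega)
  have hns : ¬ p ∣ (n + 1) := Nat.not_dvd_of_pos_of_lt (by omega) h1
  have hd : p ∣ catalan n := by
    rw [← hc] at hpcb
    exact (hp.dvd_mul.mp hpcb).resolve_left hns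
  refine ⟨hd, fun hsq => ?_⟩
  have hle : (n.centralBinom).factorization p ≤ 1 := by
    rw [Nat.centralBinom]
    exact Nat.factorization_choose_le_one (by nlinarith)
  have h2d : p ^ 2 ∣ n.centralBinom := hsq.trans ⟨n + 1, by rw [← hc]; ring⟩
  have := (Nat.Prime.pow_dvd_iff_le_factorization hp n.centralBinom_ne_zero).mp h2d
  omega
end

section
/- Let n ≥ 1, let p be an odd prime, and let t ≥ 1 be an integer. If (n+1)/t < p < 2n/(2t-1), then p does not divide n+1 and p/2 < n mod p < p - 1 (hence p divides Cat(n)). -/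
theorem chebyshev_segment_dvd_catalan (n p t : ℕ) (hn : 1 ≤ n) (hp : p.Prime)
    (hodd : Odd p) (ht : 1 ≤ t)
    (hlo : ((n : ℝ) + 1) / t < p) (hhi : (p : ℝ) < 2 * n / (2 * t - 1)) :
    ¬ p ∣ n + 1 ∧ p < 2 * (n % p) ∧ n % p < p - 1 ∧ p ∣ catalan n := by
  obtain ⟨t', rfl⟩ : ∃ t', t = t' + 1 := ⟨t - 1, by omega⟩
  have hppos : 0 < p := hp.pos
  have htR : (0 : ℝ) < (t' + 1 : ℕ) := by positivity
  have h2tR : (0 : ℝ) < 2 * ((t' + 1 : ℕ) : ℝ) - 1 := by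
    have : (1 : ℝ) ≤ ((t' + 1 : ℕ) : ℝ) := by exact_mod_cast Nat.one_le_iff_ne_zero.mpr (by omega)
    linarith
  -- n + 1 < (t'+1) * p
  have h1 : n + 1 < (t' + 1) * p := by
    rw [div_lt_iff₀ htR] at hlo
    have : ((n : ℝ) + 1) < (((t' + 1) * p : ℕ) : ℝ) := by push_cast; push_cast at hlo; linarith
    exact_mod_cast this
  -- (2t'+1) * p < 2 * n
  have h2 : (2 * t' + 1) * p < 2 * n := by
    rw [lt_div_iff₀ h2tR] at hhi
    have hc : (((2 * t' + 1) * p : ℕ) : ℝ) < ((2 * n : ℕ) : ℝ) := by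
      push_cast; push_cast at hhi; linarith
    exact_mod_cast hc
  set r := n % p with hr
  set q := n / p with hq
  have hdm : p * q + r = n := Nat.div_add_mod n p
  have hrlt : r < p := Nat.mod_lt _ hppos
  have e1 : (t' + 1) * p = t' * p + p := by ring
  have e2 : (2 * t' + 1) * p = 2 * (t' * p) + p := by ring
  have hqlt : q < t' + 1 := by
    rw [hq, Nat.div_lt_iff_lt_mul hppos]; omega
  have hqge : t' ≤ q := by
    rw [hq, Nat.le_div_iff_mul_le hppos]; omega
  have hqeq : q = t' := by omega
  have hmn : t' * p + r = n := by rw [Nat.mul_comm, ← hqeq]; exact hdm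
  have hrp : p < 2 * r := by omega
  have hrp1 : r < p - 1 := by omega
  have hpm : p ∣ t' * p := Dvd.intro_left _ rfl
  have hnd : ¬ p ∣ n + 1 := by
    intro h
    have hd : p ∣ (n + 1 - t' * p) := Nat.dvd_sub h hpm
    have hle : p ≤ r + 1 :=
      Nat.le_of_dvd (by omega) (by rwa [show n + 1 - t' * p = r + 1 by omega] at hd)
    omega
  refine ⟨hnd, hrp, hrp1, ?_⟩
  haveI : Fact p.Prime := ⟨hp⟩
  have hmod2n : (2 * n) % p = 2 * r - p := by
    have hcb : p * (2 * t' + 1) = 2 * (t' * p) + p := by ring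
    have hdecomp : 2 * n = p * (2 * t' + 1) + (2 * r - p) := by omega
    rw [hdecomp, Nat.mul_add_mod]
    exact Nat.mod_eq_of_lt (by omega)
  have hluc := Choose.choose_modEq_choose_mod_mul_choose_div_nat (p := p) (n := 2 * n) (k := n)
  rw [hmod2n, ← hr, Nat.choose_eq_zero_of_lt (by omega : 2 * r - p < r), zero_mul] at hluc
  have hdvdcb : p ∣ Nat.centralBinom n := by
    rw [Nat.centralBinom]
    exact (Nat.modEq_zero_iff_dvd).mp hluc
  rw [← succ_mul_catalan_eq_centralBinom] at hdvdcb
  rcases (Nat.Prime.dvd_mul hp).mp hdvdcb with h | h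
  · exact absurd h hnd
  · exact h
end
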